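/- arXiv:1304.4580 — 6 statements merged into one kernel-verified Lean document; each statement's English description precedes it below -/
import Mathlib

section
/- Let X₀ be integrable and F₀ a sub-σ-algebra, and let X_k be an integrable random variable. Then E|X₀ · E(X_k|F₀)| = Cov( |X₀|·(1_{E(X_k|F₀)>0} − 1_{E(X_k|F₀)≤0}), X_k ), provided X₀ is F₀-measurable and X_k is centered. -/
/-! With `s = ±1` the sign of `E(X_k|F₀)` (taken as `-1` where it vanishes),
`|X₀ E(X_k|F₀)| = |X₀| s E(X_k|F₀)`. The factor `|X₀| s` is `F₀`-measurable, so pulling it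
into the conditional expectation and integrating replaces `E(X_k|F₀)` by `X_k`; the mean term
of the covariance vanishes because `X_k` is centred. -/

open MeasureTheory ProbabilityTheory

noncomputable section

def cov {Ω : Type*} [MeasurableSpace Ω] (μ : Measure Ω) (U V : Ω → ℝ) : ℝ :=
  (∫ ω, U ω * V ω ∂μ) - (∫ ω, U ω ∂μ) * (∫ ω, V ω ∂μ)

lemma abs_eq_ite_pos_mul (b : ℝ) : |b| = (if b > 0 then 1 else -1) * b := by
  split_ifs with hb
  · rw [abs_of_pos hb, one_mul]
  · rw [abs_of_nonpos (not_lt.mp hb), neg_one_mul]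

lemma cov_eq_integral_mul_of_integral_eq_zero {Ω : Type*} {mΩ : MeasurableSpace Ω}
    {μ : Measure Ω} {U V : Ω → ℝ} (hV : ∫ ω, V ω ∂μ = 0) : cov μ U V = ∫ ω, U ω * V ω ∂μ := by
  rw [cov, hV, mul_zero, sub_zero]

theorem integral_mul_condExp_of_stronglyMeasurable {Ω : Type*} {m m₀ : MeasurableSpace Ω}
    {μ : Measure Ω} (hm : m ≤ m₀) [SigmaFinite (μ.trim hm)] {f g : Ω → ℝ}
    (hf : StronglyMeasurable[m] f) (hfg : Integrable (f * g) μ) (hg : Integrable g μ) :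
    ∫ ω, f ω * (μ[g|m]) ω ∂μ = ∫ ω, f ω * g ω ∂μ := by
  calc ∫ ω, f ω * (μ[g|m]) ω ∂μ = ∫ ω, (μ[f * g|m]) ω ∂μ :=
        integral_congr_ae (condExp_mul_of_stronglyMeasurable_left hf hfg hg).symm
    _ = ∫ ω, f ω * g ω ∂μ := integral_condExp hm

theorem stmt3_general {Ω : Type*} [m : MeasurableSpace Ω] (μ : Measure Ω) [IsProbabilityMeasure μ]
    (F₀ : MeasurableSpace Ω) (hF₀ : F₀ ≤ m)
    (X₀ Xk : Ω → ℝ)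
    (hX₀meas : Measurable[F₀] X₀)
    (hXkint : Integrable Xk μ)
    (hXkc : ∫ ω, Xk ω ∂μ = 0)
    (hprod' : Integrable (fun ω => |X₀ ω| * Xk ω) μ) :
    ∫ ω, |X₀ ω * (μ[Xk|F₀]) ω| ∂μ =
      @cov Ω m μ
        (fun ω => |X₀ ω| * (if (μ[Xk|F₀]) ω > 0 then (1 : ℝ) else -1)) Xk := by
  set s : Ω → ℝ := fun ω => if (μ[Xk|F₀]) ω > 0 then 1 else -1
  have hs : Measurable[F₀] s :=
    Measurable.ite (measurableSet_lt measurable_const stronglyMeasurable_condExp.measurable)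
      measurable_const measurable_const
  have hsXk : Integrable (fun ω => |X₀ ω| * s ω * Xk ω) μ := by
    have := hprod'.bdd_mul (c := 1) (hs.mono hF₀ le_rfl).aestronglyMeasurable
      (.of_forall fun ω => by by_cases h : (μ[Xk|F₀]) ω > 0 <;> simp [s, h])
    simpa only [mul_left_comm, mul_assoc] using this
  have hU : StronglyMeasurable[F₀] (fun ω => |X₀ ω| * s ω) :=
    (hX₀meas.abs.mul hs).stronglyMeasurable
  rw [cov_eq_integral_mul_of_integral_eq_zero hXkc,
    ← integral_mul_condExp_of_stronglyMeasurable hF₀ hU hsXk hXkint]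
  simp_rw [abs_mul, abs_eq_ite_pos_mul ((μ[Xk|F₀]) _), s, mul_assoc]

/-- Identity (6.1) of Dedecker–Rio (2000):
`E|X₀ E(X_k|F₀)| = Cov(|X₀|(1_{E(X_k|F₀)>0} - 1_{E(X_k|F₀)≤0}), X_k)`. -/
theorem stmt3 {Ω : Type*} [m : MeasurableSpace Ω] (μ : Measure Ω) [IsProbabilityMeasure μ]
    (F₀ : MeasurableSpace Ω) (hF₀ : F₀ ≤ m)
    (X₀ Xk : Ω → ℝ)
    (hX₀meas : Measurable[F₀] X₀)
    (hX₀int : Integrable X₀ μ) (hXkint : Integrable Xk μ)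
    (hXkc : ∫ ω, Xk ω ∂μ = 0)
    (hprod : Integrable (fun ω => X₀ ω * (μ[Xk|F₀]) ω) μ)
    (hprod' : Integrable (fun ω => |X₀ ω| * Xk ω) μ) :
    ∫ ω, |X₀ ω * (μ[Xk|F₀]) ω| ∂μ =
      @cov Ω m μ
        (fun ω => |X₀ ω| * (if (μ[Xk|F₀]) ω > 0 then (1 : ℝ) else -1)) Xk :=
  stmt3_general (m := m) μ F₀ hF₀ X₀ Xk hX₀meas hXkint hXkc hprod'
end
end

section
/- Let (X_i) be a stationary sequence adapted to a filtration (F_i) with X_i = X₀∘T^i, and set S_n = X₁+⋯+X_n. If Σ_{k≥1} ||E(X_k|F₀)||_2 / k^{1/2} < ∞, then the Maxwell–Woodroofe condition Σ_{k≥1} ||E(S_k|F₀)||_2 / k^{3/2} < ∞ holds. -/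
open MeasureTheory Finset

/-!
By the triangle inequality, `‖E(S_n|F₀)‖₂ ≤ ∑_{k ≤ n} a_k` with `a_k = ‖E(X_k|F₀)‖₂`.
Exchanging the order of summation,
`∑_n n^{-3/2} ∑_{k ≤ n} a_k = ∑_k a_k ∑_{n ≥ k} n^{-3/2}`, and the inner tail is at most a
constant times `k^{-1/2}` by comparison with the telescoping sum of `n^{-1/2} - (n+1)^{-1/2}`.
-/

theorem Summable.sum_antidiagonal {A α : Type*} [AddCommMonoid A] [HasAntidiagonal A]
    [AddCommMonoid α] [TopologicalSpace α] [ContinuousAdd α] [RegularSpace α] {f : A × A → α}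
    (hf : Summable f) : Summable fun n ↦ ∑ p ∈ antidiagonal n, f p :=
  ((HasAntidiagonal.sigmaAntidiagonalEquivProd.summable_iff.mpr hf).hasSum.sigma
    fun n ↦ (antidiagonal n).hasSum f).summable

/- `1/√x - 1/√(x+1) = 1/(√x √(x+1) (√x + √(x+1)))`, and `√(x+1) ≤ 3/2 √x` for `x ≥ 1`. -/
theorem inv_mul_sqrt_le_sub_inv_sqrt {x : ℝ} (hx : 1 ≤ x) :
    (x * √x)⁻¹ ≤ 4 * ((√x)⁻¹ - (√(x + 1))⁻¹) := by
  set u := √x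
  set v := √(x + 1)
  have hu : 0 < u := Real.sqrt_pos.mpr (by linarith)
  have hu2 : u ^ 2 = x := Real.sq_sqrt (by linarith)
  have hv2 : v ^ 2 = x + 1 := Real.sq_sqrt (by linarith)
  have huv : u ≤ v := Real.sqrt_le_sqrt (by linarith)
  have hv : v ≤ 3 / 2 * u := by nlinarith
  have key : v ≤ 4 * x * (v - u) := by
    have hprod : (v - u) * (v + u) = 1 := by nlinarith
    have : v * (v + u) ≤ 4 * x * (v - u) * (v + u) := by nlinarith
    exact le_of_mul_le_mul_right this (by linarith)
  rw [inv_sub_inv hu.ne' (by linarith), inv_eq_one_div, ← mul_div_assoc,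
    div_le_div_iff₀ (by positivity) (mul_pos hu (by linarith))]
  nlinarith

theorem rpow_three_halves_eq_mul_sqrt {x : ℝ} (hx : 0 ≤ x) : x ^ ((3 : ℝ) / 2) = x * √x := by
  rw [show (3 : ℝ) / 2 = 1 + 1 / 2 by norm_num, Real.rpow_add' hx (by norm_num), Real.rpow_one,
    Real.sqrt_eq_rpow]

theorem sum_range_inv_rpow_three_halves_le (k N : ℕ) :
    ∑ j ∈ range N, (((k : ℝ) + j + 1) ^ ((3 : ℝ) / 2))⁻¹ ≤
      4 * (((k : ℝ) + 1) ^ ((1 : ℝ) / 2))⁻¹ := by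
  set g : ℕ → ℝ := fun j ↦ (√((k : ℝ) + j + 1))⁻¹
  have hstep (j : ℕ) : (((k : ℝ) + j + 1) ^ ((3 : ℝ) / 2))⁻¹ ≤ 4 * (g j - g (j + 1)) := by
    rw [rpow_three_halves_eq_mul_sqrt (by positivity)]
    convert inv_mul_sqrt_le_sub_inv_sqrt (x := (k : ℝ) + j + 1)
      (le_add_of_nonneg_left (by positivity)) using 5
    push_cast
    ring
  calc ∑ j ∈ range N, (((k : ℝ) + j + 1) ^ ((3 : ℝ) / 2))⁻¹
      ≤ ∑ j ∈ range N, 4 * (g j - g (j + 1)) := sum_le_sum fun j _ ↦ hstep j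
    _ = 4 * (g 0 - g N) := by rw [← mul_sum, sum_range_sub']
    _ ≤ 4 * g 0 := by
        have : 0 ≤ g N := by positivity
        linarith
    _ = 4 * (((k : ℝ) + 1) ^ ((1 : ℝ) / 2))⁻¹ := by simp [g, Real.sqrt_eq_rpow]

theorem summable_sum_range_div_rpow_three_halves {a : ℕ → ℝ} (ha : ∀ k, 0 ≤ a k)
    (h : Summable fun k : ℕ ↦ a k / ((k : ℝ) + 1) ^ ((1 : ℝ) / 2)) :
    Summable fun n : ℕ ↦ (∑ k ∈ range (n + 1), a k) / ((n : ℝ) + 1) ^ ((3 : ℝ) / 2) := by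
  set F : ℕ × ℕ → ℝ := fun p ↦ a p.1 / ((p.1 : ℝ) + p.2 + 1) ^ ((3 : ℝ) / 2)
  have hF : 0 ≤ F := fun p ↦ div_nonneg (ha _) (by positivity)
  have hrow (k N : ℕ) : ∑ j ∈ range N, F (k, j) ≤ 4 * (a k / ((k : ℝ) + 1) ^ ((1 : ℝ) / 2)) := by
    simp only [F, div_eq_mul_inv, ← mul_sum]
    exact (mul_le_mul_of_nonneg_left (sum_range_inv_rpow_three_halves_le k N) (ha k)).trans_eq
      (by rw [div_eq_mul_inv, mul_left_comm])
  have hFsum : Summable F := (summable_prod_of_nonneg hF).mpr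
    ⟨fun k ↦ summable_of_sum_range_le (fun j ↦ hF _) (hrow k),
     .of_nonneg_of_le (fun k ↦ tsum_nonneg fun j ↦ hF _)
      (fun k ↦ Real.tsum_le_of_sum_range_le (fun j ↦ hF _) (hrow k)) (h.mul_left 4)⟩
  refine hFsum.sum_antidiagonal.congr fun n ↦ ?_
  rw [Nat.sum_antidiagonal_eq_sum_range_succ_mk, sum_div]
  refine sum_congr rfl fun k hk ↦ ?_
  simp [F, Nat.cast_sub (mem_range_succ_iff.mp hk)]

theorem toReal_eLpNorm_condExp_sum_le {Ω ι E : Type*} {m m₀ : MeasurableSpace Ω} {μ : Measure Ω}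
    [IsFiniteMeasure μ] [NormedAddCommGroup E] [NormedSpace ℝ E] [CompleteSpace E]
    {p : ENNReal} (hp : 1 ≤ p) {s : Finset ι} {f : ι → Ω → E} (hf : ∀ i ∈ s, MemLp (f i) p μ) :
    (eLpNorm (μ[∑ i ∈ s, f i | m]) p μ).toReal ≤ ∑ i ∈ s, (eLpNorm (μ[f i | m]) p μ).toReal := by
  rw [eLpNorm_congr_ae (condExp_finsetSum (fun i hi ↦ (hf i hi).integrable hp) m)]
  simp only [toReal_eLpNorm integrable_condExp.aestronglyMeasurable,
    toReal_eLpNorm (aestronglyMeasurable_sum _ fun i _ ↦ integrable_condExp.aestronglyMeasurable)]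
  exact lpNorm_sum_le (fun i hi ↦ (hf i hi).condExp hp) hp

theorem sum_Icc_one_eq_sum_range {M : Type*} [AddCommMonoid M] (g : ℕ → M) (n : ℕ) :
    ∑ i ∈ Icc 1 n, g i = ∑ k ∈ range n, g (k + 1) := by
  rw [← Ico_add_one_right_eq_Icc, sum_Ico_eq_sum_range]
  simp [add_comm]

theorem stmt4_general {Ω : Type*} [m : MeasurableSpace Ω] (μ : Measure Ω) [IsProbabilityMeasure μ]
    (T : Ω → Ω) (hT : MeasurePreserving T μ μ)
    (F₀ : MeasurableSpace Ω)
    (X : ℕ → Ω → ℝ)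
    (hX0 : MemLp (X 0) 2 μ)
    (hstat : ∀ i, X i = X 0 ∘ T^[i])
    (S : ℕ → Ω → ℝ) (hS : ∀ n, S n = fun ω => ∑ i ∈ Finset.Icc 1 n, X i ω)
    (hsum : Summable fun k : ℕ =>
      (eLpNorm (μ[X (k + 1)|F₀]) 2 μ).toReal / ((k : ℝ) + 1) ^ ((1 : ℝ) / 2)) :
    Summable fun k : ℕ =>
      (eLpNorm (μ[S (k + 1)|F₀]) 2 μ).toReal / ((k : ℝ) + 1) ^ ((3 : ℝ) / 2) := by
  have hX (i : ℕ) : MemLp (X i) 2 μ := by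
    rw [hstat i]
    -- `F₀` is a local `MeasurableSpace` instance as well, so `m` has to be passed by hand.
    exact hX0.comp_measurePreserving (@MeasurePreserving.iterate _ m _ _ hT i)
  have hS' (n : ℕ) : S n = ∑ k ∈ range n, X (k + 1) := by
    rw [hS, ← sum_Icc_one_eq_sum_range]
    ext ω
    simp
  refine .of_nonneg_of_le (fun n ↦ by positivity) (fun n ↦ ?_)
    (summable_sum_range_div_rpow_three_halves (fun k ↦ ENNReal.toReal_nonneg) hsum)
  gcongr
  rw [hS']
  exact toReal_eLpNorm_condExp_sum_le one_le_two fun k _ ↦ hX (k + 1)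

/-- If `Σ_k ‖E(X_k|F₀)‖₂ / k^{1/2} < ∞` then the Maxwell–Woodroofe condition
`Σ_k ‖E(S_k|F₀)‖₂ / k^{3/2} < ∞` holds, for a stationary adapted sequence. -/
theorem stmt4 {Ω : Type*} [m : MeasurableSpace Ω] (μ : Measure Ω) [IsProbabilityMeasure μ]
    (T : Ω → Ω) (hT : MeasurePreserving T μ μ) (hTbij : Function.Bijective T)
    (F₀ : MeasurableSpace Ω) (hF₀ : F₀ ≤ m)
    (hF₀T : F₀ ≤ F₀.comap T)
    (X : ℕ → Ω → ℝ)
    (hX0meas : Measurable[F₀] (X 0))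
    (hX0 : MemLp (X 0) 2 μ) (hX0c : ∫ ω, X 0 ω ∂μ = 0)
    (hstat : ∀ i, X i = X 0 ∘ T^[i])
    (S : ℕ → Ω → ℝ) (hS : ∀ n, S n = fun ω => ∑ i ∈ Finset.Icc 1 n, X i ω)
    (hsum : Summable fun k : ℕ =>
      (eLpNorm (μ[X (k + 1)|F₀]) 2 μ).toReal / ((k : ℝ) + 1) ^ ((1 : ℝ) / 2)) :
    Summable fun k : ℕ =>
      (eLpNorm (μ[S (k + 1)|F₀]) 2 μ).toReal / ((k : ℝ) + 1) ^ ((3 : ℝ) / 2) :=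
  stmt4_general (m := m) μ T hT F₀ X hX0 hstat S hS hsum
end

section
/- Let (X_i) be stationary with maximal correlation coefficients ρ(n). If Σ_{k≥1} ρ(k)/k < ∞, then Σ_{j≥0} ρ(2^j) < ∞; combined with the dyadic bound ||E(S_{2^{r+1}}|F₀)||_2 ≤ c Σ_{j=0}^{r} 2^{j/2} ρ(2^j), this yields Σ_{r≥0} ||E(S_{2^r}|F₀)||_2 / 2^{r/2} < ∞ and hence the Maxwell–Woodroofe condition Σ_{k≥1} ||E(S_k|F₀)||_2/k^{3/2} < ∞. -/
/-! Cauchy condensation turns `Σ ρ(k)/k < ∞` into `Σ ρ(2^j) < ∞`. Dividing the dyadic bound by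
`2^{(r+1)/2}` dominates `‖E(S_{2^r}|F₀)‖₂ / 2^{r/2}` by the Cauchy product of `ρ(2^j)` with the
geometric sequence `2^{-i/2}`, hence it is summable. For the Maxwell–Woodroofe series, binary
expansion and subadditivity give `‖E(S_k|F₀)‖₂ ≤ T_r := Σ_{j≤r} ‖E(S_{2^j}|F₀)‖₂` for
`k < 2^{r+1}`; the block `[2^r, 2^{r+1})` has `2^r` terms, each at most `T_r / 2^{3r/2}`, and
`Σ_r T_r / 2^{r/2}` is again a Cauchy product with a geometric series. -/

open MeasureTheory ProbabilityTheory Finset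

noncomputable section

theorem Antitone.summable_comp_two_pow {ρ : ℕ → ℝ} (hρ : Antitone ρ) (hρ0 : ∀ n, 0 ≤ ρ n)
    (hsum : Summable fun k : ℕ => ρ k / k) : Summable fun j : ℕ => ρ (2 ^ j) := by
  have h_mono : ∀ ⦃m n : ℕ⦄, 0 < m → m ≤ n → ρ n / n ≤ ρ m / m := fun m n hm hmn =>
    div_le_div₀ (hρ0 m) (hρ hmn) (Nat.cast_pos.2 hm) (Nat.cast_le.2 hmn)
  refine ((summable_condensed_iff_of_nonneg (fun n => div_nonneg (hρ0 n) n.cast_nonneg)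
    h_mono).2 hsum).congr fun j => ?_
  push_cast
  field_simp

theorem summable_sum_range_mul_geometric {b : ℕ → ℝ} (hb : Summable b) (hb0 : ∀ n, 0 ≤ b n)
    {x : ℝ} (hx0 : 0 ≤ x) (hx1 : x < 1) :
    Summable fun n => ∑ k ∈ range (n + 1), b k * x ^ (n - k) :=
  summable_sum_mul_range_of_summable_mul <|
    hb.mul_of_nonneg (summable_geometric_of_lt_one hx0 hx1) hb0 fun n => pow_nonneg hx0 n

theorem summable_div_pow_of_le_sum_pow_mul {u b : ℕ → ℝ} {q c : ℝ} (hq : 1 < q)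
    (hu0 : ∀ n, 0 ≤ u n) (hb : Summable b) (hb0 : ∀ n, 0 ≤ b n)
    (hu : ∀ r, u (r + 1) ≤ c * ∑ j ∈ range (r + 1), q ^ j * b j) :
    Summable fun r => u r / q ^ r := by
  have hq0 : 0 < q := zero_lt_one.trans hq
  have hweight : ∀ r j, j ≤ r → q ^ j / q ^ (r + 1) = q⁻¹ * q⁻¹ ^ (r - j) := by
    intro r j hjr
    rw [inv_pow, ← mul_inv, ← pow_succ', show r + 1 = r - j + 1 + j by omega, pow_add,
      div_mul_cancel_right₀ (pow_ne_zero _ hq0.ne')]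
  refine (summable_nat_add_iff 1).1 <| Summable.of_nonneg_of_le
    (fun r => div_nonneg (hu0 _) (pow_nonneg hq0.le _)) (fun r => ?_)
    ((summable_sum_range_mul_geometric hb hb0 (inv_nonneg.2 hq0.le)
      (inv_lt_one_of_one_lt₀ hq)).mul_left (c * q⁻¹))
  calc u (r + 1) / q ^ (r + 1)
      ≤ (c * ∑ j ∈ range (r + 1), q ^ j * b j) / q ^ (r + 1) := by
        gcongr; exact hu r
    _ = c * q⁻¹ * ∑ j ∈ range (r + 1), b j * q⁻¹ ^ (r - j) := by
        rw [mul_sum, mul_sum, sum_div]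
        refine sum_congr rfl fun j hj => ?_
        rw [mul_div_assoc, mul_div_right_comm, hweight r j (Nat.lt_succ_iff.1 (mem_range.1 hj))]
        ring

theorem Subadditive.le_sum_range_two_pow {a : ℕ → ℝ} (ha : Subadditive a) (ha0 : ∀ n, 0 ≤ a n)
    {r k : ℕ} (hk : 0 < k) (hkr : k < 2 ^ (r + 1)) : a k ≤ ∑ j ∈ range (r + 1), a (2 ^ j) := by
  induction r generalizing k with
  | zero =>
    obtain rfl : k = 1 := by omega
    simp
  | succ r ih =>
    rw [sum_range_succ]
    rcases lt_or_ge k (2 ^ (r + 1)) with hlt | hge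
    · linarith [ih hk hlt, ha0 (2 ^ (r + 1))]
    · obtain ⟨l, rfl⟩ := Nat.exists_eq_add_of_le hge
      rcases l.eq_zero_or_pos with rfl | hl
      · rw [add_zero]
        linarith [sum_nonneg fun j (_ : j ∈ range (r + 1)) => ha0 (2 ^ j)]
      · have := ih hl (by rw [pow_succ] at hkr; omega)
        linarith [ha (2 ^ (r + 1)) l]

theorem sum_Ico_one_two_pow_le {F g : ℕ → ℝ}
    (hF : ∀ r k, 2 ^ r ≤ k → k < 2 ^ (r + 1) → F k ≤ g r) (R : ℕ) :
    ∑ k ∈ Ico 1 (2 ^ R), F k ≤ ∑ r ∈ range R, 2 ^ r * g r := by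
  induction R with
  | zero => simp
  | succ R ih =>
    rw [← sum_Ico_consecutive _ Nat.one_le_two_pow (Nat.pow_le_pow_right two_pos R.le_succ),
      sum_range_succ]
    have hcard : #(Ico (2 ^ R) (2 ^ (R + 1))) = 2 ^ R := by
      rw [Nat.card_Ico, pow_succ]; omega
    have hblock : ∑ k ∈ Ico (2 ^ R) (2 ^ (R + 1)), F k ≤ 2 ^ R * g R := by
      have := sum_le_card_nsmul _ F (g R) fun k hk => hF R k (mem_Ico.1 hk).1 (mem_Ico.1 hk).2
      rwa [hcard, nsmul_eq_mul, Nat.cast_pow, Nat.cast_ofNat] at this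
    linarith

theorem Subadditive.summable_div_rpow_three_halves {a : ℕ → ℝ} (ha : Subadditive a)
    (ha0 : ∀ n, 0 ≤ a n) (hdyad : Summable fun r => a (2 ^ r) / √2 ^ r) :
    Summable fun k : ℕ => a k / (k : ℝ) ^ (3 / 2 : ℝ) := by
  have hs0 : 0 < √2 := by positivity
  set T : ℕ → ℝ := fun r => ∑ j ∈ range (r + 1), a (2 ^ j)
  have hT : Summable fun r => T r / √2 ^ r := by
    refine (summable_sum_range_mul_geometric hdyad (fun r => div_nonneg (ha0 _) (by positivity))
      (inv_nonneg.2 hs0.le) (inv_lt_one_of_one_lt₀ Real.one_lt_sqrt_two)).congr fun r => ?_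
    rw [sum_div]
    refine sum_congr rfl fun j hj => ?_
    rw [inv_pow, ← div_eq_mul_inv, div_div, ← pow_add,
      Nat.add_sub_cancel' (Nat.lt_succ_iff.1 (mem_range.1 hj))]
  have hblock : ∀ r k, 2 ^ r ≤ k → k < 2 ^ (r + 1) →
      a k / (k : ℝ) ^ (3 / 2 : ℝ) ≤ T r / (√2 ^ r) ^ 3 := by
    intro r k hrk hkr
    have hsk : √2 ^ r ≤ √(k : ℝ) := by
      rw [Real.le_sqrt (by positivity) k.cast_nonneg, ← pow_mul, mul_comm, pow_mul,
        Real.sq_sqrt zero_le_two]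
      exact_mod_cast hrk
    rw [Real.rpow_div_two_eq_sqrt _ k.cast_nonneg, Real.rpow_ofNat]
    exact div_le_div₀ (sum_nonneg fun j _ => ha0 _)
      (ha.le_sum_range_two_pow ha0 (lt_of_lt_of_le Nat.one_le_two_pow hrk) hkr)
      (by positivity) (by gcongr)
  refine summable_of_sum_range_le (c := ∑' r, T r / √2 ^ r)
    (fun k => div_nonneg (ha0 k) (by positivity)) fun N => ?_
  calc ∑ k ∈ range N, a k / (k : ℝ) ^ (3 / 2 : ℝ)
      ≤ ∑ k ∈ range (2 ^ N), a k / (k : ℝ) ^ (3 / 2 : ℝ) :=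
        sum_le_sum_of_subset_of_nonneg (range_mono Nat.lt_two_pow_self.le)
          fun k _ _ => div_nonneg (ha0 k) (by positivity)
    _ = ∑ k ∈ Ico 1 (2 ^ N), a k / (k : ℝ) ^ (3 / 2 : ℝ) := by
        rw [sum_range_eq_add_Ico _ (by positivity)]
        simp
    _ ≤ ∑ r ∈ range N, 2 ^ r * (T r / (√2 ^ r) ^ 3) := sum_Ico_one_two_pow_le hblock N
    _ = ∑ r ∈ range N, T r / √2 ^ r := by
        refine sum_congr rfl fun r _ => ?_
        have hsq : (2 : ℝ) ^ r = (√2 ^ r) ^ 2 := by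
          rw [← pow_mul, mul_comm, pow_mul, Real.sq_sqrt zero_le_two]
        rw [hsq]
        field_simp
    _ ≤ ∑' r, T r / √2 ^ r :=
        hT.sum_le_tsum _ fun r _ => div_nonneg (sum_nonneg fun j _ => ha0 _) (by positivity)

theorem two_rpow_natCast_div_two (r : ℕ) : (2 : ℝ) ^ ((r : ℝ) / 2) = √2 ^ r := by
  rw [Real.rpow_div_two_eq_sqrt _ zero_le_two, Real.rpow_natCast]

theorem stmt7_general {Ω : Type*} [m : MeasurableSpace Ω] (μ : Measure Ω)
    (F₀ : MeasurableSpace Ω)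
    (S : ℕ → Ω → ℝ)
    (ρ : ℕ → ℝ) (hρ_anti : Antitone ρ) (hρ_mem : ∀ n, ρ n ∈ Set.Icc (0 : ℝ) 1)
    (hsubadd : ∀ m' n : ℕ, (eLpNorm (μ[S (m' + n)|F₀]) 2 μ).toReal ≤
      (eLpNorm (μ[S m'|F₀]) 2 μ).toReal + (eLpNorm (μ[S n|F₀]) 2 μ).toReal)
    (c : ℝ)
    (hdyadbound : ∀ r : ℕ, (eLpNorm (μ[S (2 ^ (r + 1))|F₀]) 2 μ).toReal ≤
      c * ∑ j ∈ Finset.range (r + 1), (2 : ℝ) ^ ((j : ℝ) / 2) * ρ (2 ^ j))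
    (hsum : Summable fun k : ℕ => ρ (k + 1) / ((k : ℝ) + 1)) :
    (Summable fun j : ℕ => ρ (2 ^ j)) ∧
    (Summable fun r : ℕ =>
      (eLpNorm (μ[S (2 ^ r)|F₀]) 2 μ).toReal / (2 : ℝ) ^ ((r : ℝ) / 2)) ∧
    (Summable fun k : ℕ =>
      (eLpNorm (μ[S (k + 1)|F₀]) 2 μ).toReal / ((k : ℝ) + 1) ^ ((3 : ℝ) / 2)) := by
  set a : ℕ → ℝ := fun n => (eLpNorm (μ[S n|F₀]) 2 μ).toReal
  have ha0 : ∀ n, 0 ≤ a n := fun n => ENNReal.toReal_nonneg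
  have hρ0 : ∀ n, 0 ≤ ρ n := fun n => (hρ_mem n).1
  have hρ : Summable fun j : ℕ => ρ (2 ^ j) :=
    hρ_anti.summable_comp_two_pow hρ0 ((summable_nat_add_iff 1).1 (by simpa using hsum))
  have hdyad : Summable fun r => a (2 ^ r) / √2 ^ r :=
    summable_div_pow_of_le_sum_pow_mul Real.one_lt_sqrt_two (fun r => ha0 _) hρ
      (fun j => hρ0 _) (by simpa only [two_rpow_natCast_div_two] using hdyadbound)
  refine ⟨hρ, by simpa only [two_rpow_natCast_div_two] using hdyad, ?_⟩
  have hsub : Subadditive a := hsubadd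
  simpa using (summable_nat_add_iff 1).2 (hsub.summable_div_rpow_three_halves ha0 hdyad)

/-- If `Σ ρ(k)/k < ∞` then `Σ_j ρ(2^j) < ∞`; combined with the dyadic bound
`‖E(S_{2^{r+1}}|F₀)‖₂ ≤ c Σ_{j=0}^r 2^{j/2} ρ(2^j)` and subadditivity of
`n ↦ ‖E(S_n|F₀)‖₂`, this yields `Σ_r ‖E(S_{2^r}|F₀)‖₂/2^{r/2} < ∞` and hence
the Maxwell–Woodroofe condition `Σ_k ‖E(S_k|F₀)‖₂/k^{3/2} < ∞`. -/
theorem stmt7 {Ω : Type*} [m : MeasurableSpace Ω] (μ : Measure Ω) [IsProbabilityMeasure μ]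
    (F₀ : MeasurableSpace Ω) (hF₀ : F₀ ≤ m)
    (S : ℕ → Ω → ℝ)
    (ρ : ℕ → ℝ) (hρ_anti : Antitone ρ) (hρ_mem : ∀ n, ρ n ∈ Set.Icc (0 : ℝ) 1)
    (hsubadd : ∀ m' n : ℕ, (eLpNorm (μ[S (m' + n)|F₀]) 2 μ).toReal ≤
      (eLpNorm (μ[S m'|F₀]) 2 μ).toReal + (eLpNorm (μ[S n|F₀]) 2 μ).toReal)
    (c : ℝ) (hc : 0 < c)
    (hdyadbound : ∀ r : ℕ, (eLpNorm (μ[S (2 ^ (r + 1))|F₀]) 2 μ).toReal ≤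
      c * ∑ j ∈ Finset.range (r + 1), (2 : ℝ) ^ ((j : ℝ) / 2) * ρ (2 ^ j))
    (hsum : Summable fun k : ℕ => ρ (k + 1) / ((k : ℝ) + 1)) :
    (Summable fun j : ℕ => ρ (2 ^ j)) ∧
    (Summable fun r : ℕ =>
      (eLpNorm (μ[S (2 ^ r)|F₀]) 2 μ).toReal / (2 : ℝ) ^ ((r : ℝ) / 2)) ∧
    (Summable fun k : ℕ =>
      (eLpNorm (μ[S (k + 1)|F₀]) 2 μ).toReal / ((k : ℝ) + 1) ^ ((3 : ℝ) / 2)) :=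
  stmt7_general (m := m) μ F₀ S ρ hρ_anti hρ_mem hsubadd c hdyadbound hsum
end
end

section
/- Let E = [−1,1], υ a symmetric atomless probability measure on E with θ = ∫_E |x|^{-1} υ(dx) < ∞, and define the transition kernel Q(x, A) = (1−|x|) δ_x(A) + |x| υ(A). Then the probability measure π(dx) = θ^{-1} |x|^{-1} υ(dx) is invariant for Q, i.e., ∫_E Q(x,A) π(dx) = π(A) for every Borel set A ⊆ E. -/
open MeasureTheory ProbabilityTheory

noncomputable section

/-- The Metropolis–Hastings-type kernel `Q(x,A) = (1-|x|)δ_x(A) + |x|υ(A)` on `[-1,1]`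
leaves the measure `π(dx) = θ⁻¹|x|⁻¹υ(dx)` invariant. -/
theorem stmt8 (υ : Measure ℝ) [IsProbabilityMeasure υ]
    (hsupp : υ (Set.Icc (-1 : ℝ) 1)ᶜ = 0)
    (hsymm : υ.map (fun x => -x) = υ)
    (hatomless : ∀ x : ℝ, υ {x} = 0)
    (hθint : Integrable (fun x => |x|⁻¹) υ)
    (θ : ℝ) (hθ : θ = ∫ x, |x|⁻¹ ∂υ)
    (π : Measure ℝ) (hπ : π = υ.withDensity fun x => ENNReal.ofReal (θ⁻¹ * |x|⁻¹))
    (Q : ℝ → Set ℝ → ENNReal)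
    (hQ : ∀ x A, Q x A = ENNReal.ofReal (1 - |x|) * Measure.dirac x A +
      ENNReal.ofReal |x| * υ A) :
    ∀ A : Set ℝ, MeasurableSet A → ∫⁻ x, Q x A ∂π = π A := by
  intro A hA
  have hθ0 : 0 ≤ θ⁻¹ :=
    inv_nonneg.2 (hθ ▸ integral_nonneg fun x => inv_nonneg.2 (abs_nonneg x))
  have hE : ∀ᵐ x ∂υ, |x| ≤ 1 ∧ x ≠ 0 := by
    have h1 : ∀ᵐ x ∂υ, x ∈ Set.Icc (-1 : ℝ) 1 := by
      rw [ae_iff]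
      exact hsupp
    have h2 : ∀ᵐ x ∂υ, x ≠ 0 := by
      rw [ae_iff]
      simpa [Set.setOf_eq_eq_singleton] using hatomless 0
    filter_upwards [h1, h2] with x hx hx0
    exact ⟨abs_le.2 ⟨hx.1, hx.2⟩, hx0⟩
  have m_d : Measurable fun x : ℝ => ENNReal.ofReal (θ⁻¹ * |x|⁻¹) :=
    (measurable_const.mul measurable_id.abs.inv).ennreal_ofReal
  have m_g : Measurable fun x : ℝ =>
      ENNReal.ofReal (1 - |x|) * A.indicator (1 : ℝ → ENNReal) x +
        ENNReal.ofReal |x| * υ A := by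
    apply Measurable.add
    · exact ((measurable_const.sub (measurable_id.abs)).ennreal_ofReal).mul
        (measurable_const.indicator hA)
    · exact (measurable_id.abs.ennreal_ofReal).mul measurable_const
  have m_f : Measurable fun x : ℝ =>
      A.indicator (fun x => ENNReal.ofReal (θ⁻¹ * |x|⁻¹ * (1 - |x|))) x := by
    exact (((measurable_const.mul measurable_id.abs.inv).mul
      (measurable_const.sub measurable_id.abs)).ennreal_ofReal).indicator hA
  have key : ∫⁻ x, Q x A ∂π
      = ∫⁻ x, (fun x => ENNReal.ofReal (θ⁻¹ * |x|⁻¹) *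
          (ENNReal.ofReal (1 - |x|) * A.indicator (1 : ℝ → ENNReal) x +
            ENNReal.ofReal |x| * υ A)) x ∂υ := by
    simp only [hQ, Measure.dirac_apply' _ hA, hπ]
    rw [lintegral_withDensity_eq_lintegral_mul _ m_d m_g]
    rfl
  rw [key]
  have heq : (fun x => ENNReal.ofReal (θ⁻¹ * |x|⁻¹) *
          (ENNReal.ofReal (1 - |x|) * A.indicator (1 : ℝ → ENNReal) x +
            ENNReal.ofReal |x| * υ A))
      =ᵐ[υ] fun x => A.indicator (fun x => ENNReal.ofReal (θ⁻¹ * |x|⁻¹ * (1 - |x|))) x +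
          ENNReal.ofReal θ⁻¹ * υ A := by
    filter_upwards [hE] with x hx
    obtain ⟨hx1, hx0⟩ := hx
    have hpos : (0 : ℝ) < |x| := abs_pos.2 hx0
    have hd0 : (0 : ℝ) ≤ θ⁻¹ * |x|⁻¹ := mul_nonneg hθ0 (inv_nonneg.2 (abs_nonneg x))
    rw [mul_add]
    congr 1
    · by_cases hxa : x ∈ A
      · simp only [Set.indicator_of_mem hxa, Pi.one_apply, mul_one,
          ← ENNReal.ofReal_mul hd0]
      · simp [Set.indicator_of_notMem hxa]
    · rw [← mul_assoc, ← ENNReal.ofReal_mul hd0]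
      rw [mul_assoc, inv_mul_cancel₀ (ne_of_gt hpos), mul_one]
  rw [lintegral_congr_ae heq, lintegral_add_right _ measurable_const,
    lintegral_indicator hA _, lintegral_const, measure_univ, mul_one]
  have hπA : π A = ∫⁻ x in A, ENNReal.ofReal (θ⁻¹ * |x|⁻¹) ∂υ := by
    rw [hπ, withDensity_apply _ hA]
  rw [hπA]
  have heq2 : (fun x : ℝ => ENNReal.ofReal (θ⁻¹ * |x|⁻¹))
      =ᵐ[υ.restrict A] fun x => ENNReal.ofReal (θ⁻¹ * |x|⁻¹ * (1 - |x|)) +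
          ENNReal.ofReal θ⁻¹ := by
    filter_upwards [ae_restrict_of_ae hE] with x hx
    obtain ⟨hx1, hx0⟩ := hx
    have hpos : (0 : ℝ) < |x| := abs_pos.2 hx0
    have h1 : (0 : ℝ) ≤ 1 - |x| := by linarith
    have hd0 : (0 : ℝ) ≤ θ⁻¹ * |x|⁻¹ := mul_nonneg hθ0 (inv_nonneg.2 (abs_nonneg x))
    rw [← ENNReal.ofReal_add (mul_nonneg hd0 h1) hθ0]
    congr 1
    linear_combination θ⁻¹ * inv_mul_cancel₀ (ne_of_gt hpos)
  rw [lintegral_congr_ae heq2, lintegral_add_right _ measurable_const,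
    setLIntegral_const]
end
end

section
/- Let Q be a self-adjoint Markov operator on L²(π) with spectral measure ρ_f of f ∈ L²(π), ∫f dπ = 0, supported on [−1,1]. If ∫_{−1}^{1} (1−t)^{-1} ρ_f(dt) < ∞, then Σ_n ||E(S_n|F₀)||²_2 / n² < ∞, where E(S_n|F₀) = (Q + Q² + ⋯ + Qⁿ)f(ξ₀) and ||E(S_n|F₀)||²_2 = ∫_{−1}^{1} ( Σ_{j=1}^n t^j )² ρ_f(dt). -/
open MeasureTheory ProbabilityTheory Finset

noncomputable section

lemma geom_abs (t : ℝ) (ht : -1 ≤ t) (ht1 : t < 1) (n : ℕ) :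
    |∑ j ∈ Icc 1 n, t ^ j| ≤ min (n : ℝ) (2 / (1 - t)) := by
  have habs : |t| ≤ 1 := abs_le.2 ⟨ht, ht1.le⟩
  have hs : (0:ℝ) < 1 - t := by linarith
  have hsum : ∑ j ∈ Icc 1 n, t ^ j = t * ∑ i ∈ range n, t ^ i := by
    rw [mul_sum, show Icc 1 n = Ico 1 (n+1) from rfl, sum_Ico_eq_sum_range]
    simp [pow_succ, pow_add, mul_comm]
  refine le_min ?_ ?_
  · calc |∑ j ∈ Icc 1 n, t ^ j| ≤ ∑ j ∈ Icc 1 n, |t ^ j| := abs_sum_le_sum_abs _ _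
      _ ≤ ∑ j ∈ Icc 1 n, 1 := by
          refine sum_le_sum fun j _ => ?_
          rw [abs_pow]; exact pow_le_one₀ (abs_nonneg t) habs
      _ = n := by simp
  · rw [hsum, geom_sum_eq ht1.ne n]
    rw [abs_mul, abs_div]
    have h1 : |t ^ n - 1| ≤ 2 := by
      have : |t ^ n| ≤ 1 := by rw [abs_pow]; exact pow_le_one₀ (abs_nonneg t) habs
      calc |t ^ n - 1| ≤ |t ^ n| + 1 := by
            simpa using abs_sub (t ^ n) 1
        _ ≤ 2 := by linarith
    have h2 : |t - 1| = 1 - t := by rw [abs_of_neg (by linarith)]; ring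
    rw [h2]
    calc |t| * (|t ^ n - 1| / (1 - t)) ≤ 1 * (2 / (1 - t)) := by
          apply mul_le_mul habs _ (by positivity) zero_le_one
          exact div_le_div_of_nonneg_right h1 hs.le
      _ = 2 / (1 - t) := one_mul _

lemma key_sum (t : ℝ) (ht : -1 ≤ t) (ht1 : t < 1) (N : ℕ) :
    ∑ n ∈ range N, (∑ j ∈ Icc 1 (n + 1), t ^ j) ^ 2 / ((n : ℝ) + 1) ^ 2
      ≤ 8 / (1 - t) := by
  have hs : (0:ℝ) < 1 - t := by linarith
  set a : ℝ := 2 / (1 - t) with ha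
  have ha1 : (1:ℝ) ≤ a := by
    rw [ha, le_div_iff₀ hs]; linarith
  have ha0 : (0:ℝ) < a := lt_of_lt_of_le one_pos ha1
  -- termwise bound
  have hterm : ∀ m : ℕ, 1 ≤ m → (∑ j ∈ Icc 1 m, t ^ j) ^ 2 / (m : ℝ) ^ 2
      ≤ min 1 (a ^ 2 / (m : ℝ) ^ 2) := by
    intro m hm
    have hm0 : (0:ℝ) < (m:ℝ) := by exact_mod_cast hm
    have habs := geom_abs t ht ht1 m
    have hsq : (∑ j ∈ Icc 1 m, t ^ j) ^ 2 ≤ (min (m : ℝ) a) ^ 2 := by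
      rw [← sq_abs]
      exact pow_le_pow_left₀ (abs_nonneg _) habs 2
    refine le_min ?_ ?_
    · rw [div_le_one (by positivity)]
      exact hsq.trans (pow_le_pow_left₀ (le_min hm0.le ha0.le) (min_le_left _ _) 2)
    · exact div_le_div_of_nonneg_right
        (hsq.trans (pow_le_pow_left₀ (le_min hm0.le ha0.le) (min_le_right _ _) 2)) (by positivity)
  have hre : ∑ n ∈ range N, (∑ j ∈ Icc 1 (n + 1), t ^ j) ^ 2 / ((n : ℝ) + 1) ^ 2
      ≤ ∑ m ∈ Ico 1 (N + 1), min 1 (a ^ 2 / (m : ℝ) ^ 2) := by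
    rw [sum_Ico_eq_sum_range]
    simp only [Nat.add_sub_cancel]
    refine sum_le_sum fun n _ => ?_
    have := hterm (1 + n) (by omega)
    calc (∑ j ∈ Icc 1 (n + 1), t ^ j) ^ 2 / ((n : ℝ) + 1) ^ 2
        = (∑ j ∈ Icc 1 (1 + n), t ^ j) ^ 2 / ((1 + n : ℕ) : ℝ) ^ 2 := by
          rw [add_comm 1 n]; push_cast; ring_nf
      _ ≤ _ := hterm (1 + n) (by omega)
  refine hre.trans ?_
  set K : ℕ := ⌈a⌉₊ with hK
  have hKa : a ≤ (K : ℝ) := Nat.le_ceil a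
  have hKa2 : (K : ℝ) ≤ a + 1 := by
    have := Nat.ceil_lt_add_one ha0.le
    exact le_of_lt (by exact_mod_cast this)
  have hbound1 : ∀ (s : Finset ℕ), ∑ m ∈ s, min 1 (a ^ 2 / (m : ℝ) ^ 2) ≤ s.card := by
    intro s
    calc ∑ m ∈ s, min 1 (a ^ 2 / (m : ℝ) ^ 2) ≤ ∑ m ∈ s, 1 :=
        sum_le_sum fun m _ => min_le_left _ _
      _ = s.card := by simp
  have goal8 : 4 * a = 8 / (1 - t) := by rw [ha]; ring
  by_cases hNK : N ≤ K
  · calc ∑ m ∈ Ico 1 (N + 1), min 1 (a ^ 2 / (m : ℝ) ^ 2)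
        ≤ (Ico 1 (N+1)).card := hbound1 _
      _ = N := by simp
      _ ≤ (K : ℝ) := by exact_mod_cast hNK
      _ ≤ 4 * a := by linarith
      _ = 8 / (1 - t) := goal8
  · push_neg at hNK
    rw [← sum_Ico_consecutive _ (by omega : 1 ≤ K + 1) (by omega : K + 1 ≤ N + 1)]
    have h1 : ∑ m ∈ Ico 1 (K + 1), min 1 (a ^ 2 / (m : ℝ) ^ 2) ≤ (K : ℝ) := by
      calc _ ≤ ((Ico 1 (K+1)).card : ℝ) := hbound1 _
        _ = (K : ℝ) := by simp
    have h2 : ∑ m ∈ Ico (K + 1) (N + 1), min 1 (a ^ 2 / (m : ℝ) ^ 2) ≤ 2 * a := by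
      calc ∑ m ∈ Ico (K + 1) (N + 1), min 1 (a ^ 2 / (m : ℝ) ^ 2)
          ≤ ∑ m ∈ Ico (K + 1) (N + 1), a ^ 2 * ((m : ℝ) ^ 2)⁻¹ := by
            refine sum_le_sum fun m _ => ?_
            rw [div_eq_mul_inv] at *
            exact min_le_right _ _
        _ = a ^ 2 * ∑ m ∈ Ioo K (N + 1), ((m : ℝ) ^ 2)⁻¹ := by
            rw [← mul_sum, Finset.Ico_add_one_left_eq_Ioo]
        _ ≤ a ^ 2 * (2 / ((K : ℝ) + 1)) := by
            refine mul_le_mul_of_nonneg_left ?_ (by positivity)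
            exact_mod_cast sum_Ioo_inv_sq_le K (N + 1) (α := ℝ)
        _ ≤ a ^ 2 * (2 / a) := by
            refine mul_le_mul_of_nonneg_left ?_ (by positivity)
            exact div_le_div_of_nonneg_left (by norm_num) ha0 (by linarith)
        _ = 2 * a := by field_simp
    calc _ ≤ (K : ℝ) + 2 * a := add_le_add h1 h2
      _ ≤ 4 * a := by linarith
      _ = 8 / (1 - t) := goal8

noncomputable section

lemma sum_pow_abs_le' (t : ℝ) (h : |t| ≤ 1) (m : ℕ) :
    |∑ j ∈ Icc 1 m, t ^ j| ≤ (m : ℝ) := by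
  calc |∑ j ∈ Icc 1 m, t ^ j| ≤ ∑ j ∈ Icc 1 m, |t ^ j| := abs_sum_le_sum_abs _ _
    _ ≤ ∑ j ∈ Icc 1 m, 1 := by
        refine sum_le_sum fun j _ => ?_
        rw [abs_pow]; exact pow_le_one₀ (abs_nonneg t) h
    _ = (m : ℝ) := by simp


/-- If the spectral measure `ρ_f` of `f` for a self-adjoint Markov operator satisfies
`∫ (1-t)⁻¹ ρ_f(dt) < ∞`, then `Σ_n ‖E(S_n|F₀)‖₂²/n² < ∞`, where
`‖E(S_n|F₀)‖₂² = ∫ (Σ_{j=1}^n t^j)² ρ_f(dt)`. -/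
theorem stmt15 {Ω : Type*} [m : MeasurableSpace Ω] (μ : Measure Ω) [IsProbabilityMeasure μ]
    (F₀ : MeasurableSpace Ω) (hF₀ : F₀ ≤ m)
    (S : ℕ → Ω → ℝ)
    (ρ : Measure ℝ) [IsFiniteMeasure ρ]
    (hsupp : ρ (Set.Icc (-1 : ℝ) 1)ᶜ = 0)
    (hnorm : ∀ n : ℕ, (eLpNorm (μ[S n|F₀]) 2 μ).toReal ^ 2 =
      ∫ t, (∑ j ∈ Finset.Icc 1 n, t ^ j) ^ 2 ∂ρ)
    (hspec : ∫⁻ t, (ENNReal.ofReal (1 - t))⁻¹ ∂ρ < ⊤) :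
    Summable fun n : ℕ =>
      (eLpNorm (μ[S (n + 1)|F₀]) 2 μ).toReal ^ 2 / ((n : ℝ) + 1) ^ 2 := by

  have hIcc : ∀ᵐ t ∂ρ, t ∈ Set.Icc (-1 : ℝ) 1 :=
    ae_iff.2 (by simpa [Set.compl_def] using hsupp)
  have hmeasF : Measurable fun t : ℝ => (ENNReal.ofReal (1 - t))⁻¹ :=
    (ENNReal.measurable_ofReal.comp (measurable_const.sub measurable_id)).inv
  have hlt1 : ∀ᵐ t ∂ρ, t < 1 := by
    filter_upwards [ae_lt_top hmeasF hspec.ne] with t ht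
    by_contra h
    push_neg at h
    rw [ENNReal.inv_lt_top, ENNReal.ofReal_pos] at ht
    linarith
  -- the dominating function
  set h : ℝ → ℝ := fun t => 8 * ((ENNReal.ofReal (1 - t))⁻¹).toReal with hh
  have hInth : Integrable h ρ :=
    (integrable_toReal_of_lintegral_ne_top hmeasF.aemeasurable hspec.ne).const_mul 8
  -- integrability of each summand function
  have hIntg : ∀ k : ℕ, Integrable (fun t => (∑ j ∈ Icc 1 k, t ^ j) ^ 2) ρ := by
    intro k
    refine Integrable.mono' (integrable_const ((k : ℝ) ^ 2)) ?_ ?_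
    · exact (Continuous.aestronglyMeasurable (by continuity))
    · filter_upwards [hIcc] with t ht
      have habs : |t| ≤ 1 := abs_le.2 ⟨ht.1, ht.2⟩
      rw [Real.norm_eq_abs, abs_pow, sq_abs, ← sq_abs]
      exact pow_le_pow_left₀ (abs_nonneg _) (sum_pow_abs_le' t habs k) 2
  refine summable_of_sum_range_le (c := ∫ t, h t ∂ρ) (fun n => by positivity) fun N => ?_
  have hrw : ∀ n : ℕ, (eLpNorm (μ[S (n + 1)|F₀]) 2 μ).toReal ^ 2 / ((n : ℝ) + 1) ^ 2
      = ∫ t, (∑ j ∈ Icc 1 (n + 1), t ^ j) ^ 2 / ((n : ℝ) + 1) ^ 2 ∂ρ := by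
    intro n
    rw [hnorm (n + 1), integral_div]
  calc ∑ n ∈ range N, (eLpNorm (μ[S (n + 1)|F₀]) 2 μ).toReal ^ 2 / ((n : ℝ) + 1) ^ 2
      = ∫ t, ∑ n ∈ range N, (∑ j ∈ Icc 1 (n + 1), t ^ j) ^ 2 / ((n : ℝ) + 1) ^ 2 ∂ρ := by
        rw [integral_finset_sum _ fun n _ => (hIntg (n + 1)).div_const _]
        exact sum_congr rfl fun n _ => hrw n
    _ ≤ ∫ t, h t ∂ρ := by
        refine integral_mono_ae
          (integrable_finset_sum _ fun n _ => (hIntg (n + 1)).div_const _) hInth ?_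
        filter_upwards [hIcc, hlt1] with t ht ht1
        have hs : (0:ℝ) < 1 - t := by linarith
        have hht : h t = 8 / (1 - t) := by
          simp only [hh, ENNReal.toReal_inv, ENNReal.toReal_ofReal hs.le]
          ring
        rw [hht]
        exact key_sum t ht.1 ht1 N
end
end
end

section
/- For any finite positive Borel measure ρ on [−1,1], the condition Σ_{n≥1} n^{-2} ∫_{−1}^{1} (Σ_{j=1}^{n} t^{j})² ρ(dt) < ∞ holds if and only if ∫_{−1}^{1} (1−t)^{-1} ρ(dt) < ∞. -/
/-!
With `A_n(t) = n⁻¹ ∑_{j=1}^n t^j`, Tonelli turns the series into `∫ G dρ` where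
`G(t) = ∑_{n≥1} A_n(t)²`, so it suffices to compare `G(t)` with `(1-t)⁻¹` up to constants on
`[-1,1]`. From `(1-t) ∑_{j=1}^n t^j = t (1 - tⁿ)` we get `|A_n(t)| ≤ min 1 (2 / (n(1-t)))`, which
dominates `A_n(t)²` by the increments of a telescoping sequence summing to `32 / (1-t)`.
Conversely, for `0 ≤ t ≤ 1` we have `A_n(t) ≥ tⁿ`, hence `1 + G(t) ≥ ∑ t²ⁿ = (1-t²)⁻¹`,
and `1 - t² ≤ 2(1-t)`.
-/

open MeasureTheory Finset ENNReal

lemma summable_iff_tsum_ofReal_lt_top {α : Type*} {f : α → ℝ} (hf : ∀ a, 0 ≤ f a) :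
    Summable f ↔ ∑' a, ENNReal.ofReal (f a) < ⊤ :=
  ⟨Summable.tsum_ofReal_lt_top, fun h => by
    simpa [toReal_ofReal (hf _)] using ENNReal.summable_toReal h.ne⟩

lemma tsum_ofReal_sub_succ_le {g : ℕ → ℝ} (hg : Antitone g) (hg0 : ∀ n, 0 ≤ g n) :
    ∑' n, ENNReal.ofReal (g n - g (n + 1)) ≤ ENNReal.ofReal (g 0) :=
  ENNReal.tsum_le_of_sum_range_le fun K => by
    rw [← ofReal_sum_of_nonneg fun n _ => sub_nonneg.2 (hg n.le_succ), sum_range_sub']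
    exact ofReal_le_ofReal (sub_le_self _ (hg0 K))

lemma lintegral_lt_top_of_ae_le_mul_one_add {α : Type*} [MeasurableSpace α] {μ : Measure α}
    [IsFiniteMeasure μ] {f g : α → ℝ≥0∞} {c : ℝ≥0∞} (hc : c ≠ ⊤)
    (hfg : ∀ᵐ x ∂μ, f x ≤ c * (1 + g x)) (hg : ∫⁻ x, g x ∂μ < ⊤) : ∫⁻ x, f x ∂μ < ⊤ :=
  calc ∫⁻ x, f x ∂μ ≤ ∫⁻ x, c * (1 + g x) ∂μ := lintegral_mono_ae hfg
    _ = c * (μ Set.univ + ∫⁻ x, g x ∂μ) := by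
      rw [lintegral_const_mul' _ _ hc, lintegral_add_left measurable_const, lintegral_one]
    _ < ⊤ := mul_lt_top hc.lt_top (add_lt_top.2 ⟨measure_lt_top _ _, hg⟩)

noncomputable def powMean (n : ℕ) (t : ℝ) : ℝ := (∑ j ∈ Icc 1 n, t ^ j) / n

noncomputable def powMeanSqSum (t : ℝ) : ℝ≥0∞ := ∑' n : ℕ, ENNReal.ofReal (powMean (n + 1) t ^ 2)

lemma continuous_powMean (n : ℕ) : Continuous (powMean n) := by
  unfold powMean
  fun_prop

lemma sum_Icc_pow_mul_one_sub (n : ℕ) (t : ℝ) :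
    (∑ j ∈ Icc 1 n, t ^ j) * (1 - t) = t * (1 - t ^ n) := by
  induction n with
  | zero => simp
  | succ n ih =>
    rw [sum_Icc_succ_top (by omega)]
    linear_combination ih

lemma abs_powMean_le_one {n : ℕ} {t : ℝ} (ht : |t| ≤ 1) : |powMean n t| ≤ 1 := by
  rw [powMean, abs_div, Nat.abs_cast]
  refine div_le_one_of_le₀ ?_ n.cast_nonneg
  calc |∑ j ∈ Icc 1 n, t ^ j| ≤ ∑ j ∈ Icc 1 n, |t ^ j| := abs_sum_le_sum_abs _ _
    _ ≤ ∑ j ∈ Icc 1 n, 1 := sum_le_sum fun j _ => by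
      rw [abs_pow]
      exact pow_le_one₀ (abs_nonneg t) ht
    _ = n := by simp

lemma abs_powMean_mul_le_two {n : ℕ} {t : ℝ} (ht : -1 ≤ t) (ht1 : t ≤ 1) :
    |powMean n t| * (n * (1 - t)) ≤ 2 := by
  rcases eq_or_ne n 0 with rfl | hn
  · simp
  have htn : |t ^ n| ≤ 1 := by
    rw [abs_pow]
    exact pow_le_one₀ (abs_nonneg t) (abs_le.2 ⟨ht, ht1⟩)
  calc |powMean n t| * (n * (1 - t)) = |powMean n t * n * (1 - t)| := by
        rw [abs_mul, abs_mul, Nat.abs_cast, abs_of_nonneg (sub_nonneg.2 ht1), mul_assoc]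
    _ = |t| * |1 - t ^ n| := by
        rw [powMean, div_mul_cancel₀ _ (Nat.cast_ne_zero.2 hn), sum_Icc_pow_mul_one_sub, abs_mul]
    _ ≤ 1 * 2 := by
        gcongr
        · exact abs_le.2 ⟨ht, ht1⟩
        · exact (abs_sub _ _).trans (by rw [abs_one]; linarith)
    _ = 2 := one_mul 2

lemma powMean_sq_le {n : ℕ} {t : ℝ} (hn : n ≠ 0) (ht : -1 ≤ t) (ht1 : t < 1) :
    powMean n t ^ 2 ≤ 32 / ((n * (1 - t) + 1) * ((n + 1) * (1 - t) + 1)) := by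
  set a := |powMean n t|
  set x := 1 - t
  set y := n * x
  have ha0 : 0 ≤ a := abs_nonneg _
  have ha1 : a ≤ 1 := abs_powMean_le_one (abs_le.2 ⟨ht, ht1.le⟩)
  have hay : a * y ≤ 2 := abs_powMean_mul_le_two ht ht1.le
  have hx : 0 < x := sub_pos.2 ht1
  have hx2 : x ≤ 2 := by linarith
  have hxy : x ≤ y := le_mul_of_one_le_left hx.le (Nat.one_le_cast.2 (Nat.one_le_iff_ne_zero.2 hn))
  rw [← sq_abs, show ((n : ℝ) + 1) * x + 1 = y + x + 1 by ring, le_div_iff₀ (by positivity)]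
  rcases le_total y 1 with hy | hy
  · have : (y + 1) * (y + x + 1) ≤ 8 := by nlinarith
    nlinarith [pow_le_one₀ ha0 ha1 (n := 2)]
  · have : (y + 1) * (y + x + 1) ≤ 6 * y ^ 2 := by nlinarith
    nlinarith [mul_nonneg ha0 (by linarith : (0 : ℝ) ≤ y)]

lemma powMeanSqSum_le {t : ℝ} (ht : -1 ≤ t) (ht1 : t ≤ 1) :
    powMeanSqSum t ≤ 32 * (ENNReal.ofReal (1 - t))⁻¹ := by
  rcases ht1.eq_or_lt with rfl | ht1
  · simp
  set x := 1 - t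
  have hx : 0 < x := sub_pos.2 ht1
  set g : ℕ → ℝ := fun n => 32 / (x * ((n + 1) * x + 1))
  have hg : Antitone g := antitone_nat_of_succ_le fun n => by
    simp only [g]
    gcongr
    simp
  have hterm (n : ℕ) : powMean (n + 1) t ^ 2 ≤ g n - g (n + 1) := by
    convert powMean_sq_le n.succ_ne_zero ht ht1 using 1
    simp only [g]
    push_cast
    field_simp
    ring
  calc powMeanSqSum t ≤ ∑' n, ENNReal.ofReal (g n - g (n + 1)) :=
        ENNReal.tsum_le_tsum fun n => ofReal_le_ofReal (hterm n)
    _ ≤ ENNReal.ofReal (g 0) := tsum_ofReal_sub_succ_le hg fun n => by positivity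
    _ ≤ ENNReal.ofReal (32 / x) := by
        refine ofReal_le_ofReal ?_
        simp only [g, Nat.cast_zero, zero_add, one_mul]
        gcongr
        nlinarith
    _ = 32 * (ENNReal.ofReal x)⁻¹ := by
        rw [ofReal_div_of_pos hx, div_eq_mul_inv, ofReal_ofNat]

lemma pow_le_powMean {n : ℕ} {t : ℝ} (hn : n ≠ 0) (ht0 : 0 ≤ t) (ht1 : t ≤ 1) :
    t ^ n ≤ powMean n t := by
  rw [powMean, le_div_iff₀ (by positivity)]
  calc t ^ n * n = ∑ _j ∈ Icc 1 n, t ^ n := by simp [mul_comm]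
    _ ≤ ∑ j ∈ Icc 1 n, t ^ j :=
        sum_le_sum fun j hj => pow_le_pow_of_le_one ht0 ht1 (mem_Icc.1 hj).2

lemma inv_ofReal_one_sub_le {t : ℝ} (ht : t ≤ 1) :
    (ENNReal.ofReal (1 - t))⁻¹ ≤ 2 * (1 + powMeanSqSum t) := by
  rcases lt_or_ge t 0 with ht0 | ht0
  · calc (ENNReal.ofReal (1 - t))⁻¹ ≤ 1 := ENNReal.inv_le_one.2 (one_le_ofReal.2 (by linarith))
      _ ≤ 2 * 1 := by norm_num
      _ ≤ 2 * (1 + powMeanSqSum t) := by gcongr; exact le_self_add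
  have hgeom : (1 - ENNReal.ofReal (t ^ 2))⁻¹ ≤ 1 + powMeanSqSum t := by
    rw [← ENNReal.tsum_geometric, tsum_eq_zero_add' ENNReal.summable, pow_zero, powMeanSqSum]
    gcongr with n
    rw [← ofReal_pow (sq_nonneg t), ← pow_mul, mul_comm, pow_mul]
    exact ofReal_le_ofReal (pow_le_pow_left₀ (by positivity) (pow_le_powMean n.succ_ne_zero ht0 ht) 2)
  have hcmp : 1 - ENNReal.ofReal (t ^ 2) ≤ 2 * ENNReal.ofReal (1 - t) := by
    rw [← ofReal_one, ← ofReal_sub _ (sq_nonneg t), ← ofReal_ofNat 2, ← ofReal_mul (by norm_num)]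
    exact ofReal_le_ofReal (by nlinarith)
  calc (ENNReal.ofReal (1 - t))⁻¹ = 2 * (2 * ENNReal.ofReal (1 - t))⁻¹ := by
        rw [ENNReal.mul_inv (Or.inl two_ne_zero) (Or.inl ofNat_ne_top), ← mul_assoc,
          ENNReal.mul_inv_cancel two_ne_zero ofNat_ne_top, one_mul]
    _ ≤ 2 * (1 - ENNReal.ofReal (t ^ 2))⁻¹ := by gcongr
    _ ≤ 2 * (1 + powMeanSqSum t) := by gcongr

lemma integrable_powMean_sq {μ : Measure ℝ} [IsFiniteMeasure μ]
    (hμ : ∀ᵐ t ∂μ, t ∈ Set.Icc (-1 : ℝ) 1) (n : ℕ) :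
    Integrable (fun t => powMean n t ^ 2) μ :=
  .of_bound ((continuous_powMean n).pow 2).aestronglyMeasurable 1 <| hμ.mono fun t ht => by
    rw [norm_pow, Real.norm_eq_abs]
    exact pow_le_one₀ (abs_nonneg _) (abs_powMean_le_one (abs_le.2 ht))

/-- For a finite positive Borel measure `ρ` on `[-1,1]`:
`Σ_n n⁻² ∫ (Σ_{j=1}^n t^j)² ρ(dt) < ∞ ⟺ ∫ (1-t)⁻¹ ρ(dt) < ∞`. -/
theorem stmt16 (ρ : Measure ℝ) [IsFiniteMeasure ρ]
    (hsupp : ρ (Set.Icc (-1 : ℝ) 1)ᶜ = 0) :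
    (Summable fun n : ℕ =>
        (∫ t, (∑ j ∈ Finset.Icc 1 (n + 1), t ^ j) ^ 2 ∂ρ) / ((n : ℝ) + 1) ^ 2) ↔
      ∫⁻ t, (ENNReal.ofReal (1 - t))⁻¹ ∂ρ < ⊤ := by
  have hae : ∀ᵐ t ∂ρ, t ∈ Set.Icc (-1 : ℝ) 1 := ae_iff.2 hsupp
  have hterm (n : ℕ) :
      ENNReal.ofReal ((∫ t, (∑ j ∈ Icc 1 (n + 1), t ^ j) ^ 2 ∂ρ) / ((n : ℝ) + 1) ^ 2) =
        ∫⁻ t, ENNReal.ofReal (powMean (n + 1) t ^ 2) ∂ρ := by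
    rw [← integral_div, ← ofReal_integral_eq_lintegral_ofReal (integrable_powMean_sq hae _)
      (ae_of_all _ fun t => sq_nonneg _)]
    simp [powMean, div_pow]
  rw [summable_iff_tsum_ofReal_lt_top fun n => by positivity, tsum_congr hterm,
    ← lintegral_tsum (f := fun n t => ENNReal.ofReal (powMean (n + 1) t ^ 2))
      fun n => ((continuous_powMean _).pow 2).measurable.ennreal_ofReal.aemeasurable]
  exact ⟨lintegral_lt_top_of_ae_le_mul_one_add ofNat_ne_top
      (hae.mono fun t ht => inv_ofReal_one_sub_le ht.2),
    lintegral_lt_top_of_ae_le_mul_one_add ofNat_ne_top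
      (hae.mono fun t ht => (powMeanSqSum_le ht.1 ht.2).trans (by gcongr; exact le_add_self))⟩
end
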